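/- arXiv:1602.02536 — 3 statements merged into one kernel-verified Lean document; each statement's English description precedes it below -/
import Mathlib

section
/- The minimum number of shifts needed to transform A into its Ferrers matrix F equals Σ_{j=1}^n (F_j − A_j), where (F_j − A_j) = Σ_{i=1}^m (F_{i,j} − A_{i,j})^+. In particular, since each shift changes exactly one entry from 0 to 1 in one column and from 1 to 0 in a strictly later column of the same row, disc(A) = Σ_{j=1}^n Σ_{i=1}^m max(F_{i,j} − A_{i,j}, 0). -/
open Finset

def rowSum {m n : ℕ} (A : Fin m → Fin n → ℕ) (i : Fin m) : ℕ := ∑ j, A i j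

def colSum {m n : ℕ} (A : Fin m → Fin n → ℕ) (j : Fin n) : ℕ := ∑ i, A i j

/-- The Ferrers matrix of `A`: row `i` starts with `rowSum A i` ones followed by zeros. -/
def Ferrers {m n : ℕ} (A : Fin m → Fin n → ℕ) : Fin m → Fin n → ℕ :=
  fun i j => if (j : ℕ) < rowSum A i then 1 else 0

/-- `A` is a 0,1-matrix. -/
def ZeroOne {m n : ℕ} (A : Fin m → Fin n → ℕ) : Prop := ∀ i j, A i j = 0 ∨ A i j = 1

/-- Non-increasing row sums. -/
def RowsMono {m n : ℕ} (A : Fin m → Fin n → ℕ) : Prop :=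
  ∀ i i' : Fin m, i ≤ i' → rowSum A i' ≤ rowSum A i

/-- Non-increasing column sums. -/
def ColsMono {m n : ℕ} (A : Fin m → Fin n → ℕ) : Prop :=
  ∀ j j' : Fin n, j ≤ j' → colSum A j' ≤ colSum A j

/-- The discrepancy of Brualdi and Sanderson, via the column-difference formula:
`disc A = Σ_j Σ_i (F_{i,j} − A_{i,j})^+` (truncated subtraction on ℕ). -/
def disc {m n : ℕ} (A : Fin m → Fin n → ℕ) : ℕ :=
  ∑ j, ∑ i, (Ferrers A i j - A i j)

/-- The matrix `A` with columns permuted by `σ`. -/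
def colApply {m n : ℕ} (A : Fin m → Fin n → ℕ) (σ : Equiv.Perm (Fin n)) :
    Fin m → Fin n → ℕ := fun i j => A i (σ j)

/-- `σ` permutes only columns of equal column sum. -/
def ColPerm {m n : ℕ} (A : Fin m → Fin n → ℕ) (σ : Equiv.Perm (Fin n)) : Prop :=
  ∀ j, colSum A (σ j) = colSum A j

/-- `σ` permutes only columns whose column sum is `x`, fixing all others. -/
def BlockPerm {m n : ℕ} (A : Fin m → Fin n → ℕ) (x : ℕ) (σ : Equiv.Perm (Fin n)) : Prop :=
  ColPerm A σ ∧ ∀ j, colSum A j ≠ x → σ j = j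

/-- The isomorphic discrepancy: minimum discrepancy over column-sum-preserving permutations. -/
noncomputable def isoDisc {m n : ℕ} (A : Fin m → Fin n → ℕ) : ℕ :=
  sInf {d | ∃ σ : Equiv.Perm (Fin n), ColPerm A σ ∧ disc (colApply A σ) = d}

/-- A single shift: in some row i, a 1 in column j' is moved to an earlier column j. -/
def IsShift {m n : ℕ} (A B : Fin m → Fin n → ℕ) : Prop :=
  ∃ (i : Fin m) (j j' : Fin n), j < j' ∧ A i j = 0 ∧ A i j' = 1 ∧
    B = fun i' j'' =>
      if i' = i then (if j'' = j then 1 else if j'' = j' then 0 else A i j'') else A i' j''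

/-- ShiftChain k A B : B can be obtained from A by exactly k shifts. -/
def ShiftChain {m n : ℕ} : ℕ → (Fin m → Fin n → ℕ) → (Fin m → Fin n → ℕ) → Prop
  | 0, A, B => A = B
  | k + 1, A, B => ∃ C, IsShift A C ∧ ShiftChain k C B

/-! Each shift turns a single `0` into a `1`, so it fills at most one of the positions where `F`
has a `1` and `A` a `0`: the deficit `Σ (F_{i,j} − A_{i,j})^+` drops by at most one per shift.
Conversely, a row of a 0,1-matrix with such a missing `1` also has a surplus `1` (where `F = 0`
and `A = 1`), because both rows have the same sum. The missing `1` lies among the first `r_i`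
columns and the surplus one beyond them, so shifting the surplus `1` there is a shift; it keeps
the Ferrers matrix and lowers the deficit by exactly one. -/

def deficit {m n : ℕ} (F X : Fin m → Fin n → ℕ) : ℕ :=
  ∑ j, ∑ i, (F i j - X i j)

def moveOne {m n : ℕ} (X : Fin m → Fin n → ℕ) (i : Fin m) (j j' : Fin n) :
    Fin m → Fin n → ℕ :=
  fun i' j'' => if i' = i then (if j'' = j then 1 else if j'' = j' then 0 else X i j'') else X i' j''

section Shift

variable {m n : ℕ} {X : Fin m → Fin n → ℕ} {i : Fin m} {j j' : Fin n}

lemma isShift_moveOne (hjj' : j < j') (hj : X i j = 0) (hj' : X i j' = 1) :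
    IsShift X (moveOne X i j j') :=
  ⟨i, j, j', hjj', hj, hj', rfl⟩

lemma ZeroOne.moveOne (h01 : ZeroOne X) : ZeroOne (moveOne X i j j') := by
  intro a b
  unfold _root_.moveOne
  split_ifs <;> simp [h01 _ _]

lemma moveOne_apply_add_ite (hjj' : j ≠ j') (hj : X i j = 0) (hj' : X i j' = 1) (b : Fin n) :
    moveOne X i j j' i b + (if b = j' then 1 else 0) = X i b + (if b = j then 1 else 0) := by
  unfold moveOne
  split_ifs <;> simp_all

lemma rowSum_moveOne (hjj' : j ≠ j') (hj : X i j = 0) (hj' : X i j' = 1) (a : Fin m) :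
    rowSum (moveOne X i j j') a = rowSum X a := by
  by_cases ha : a = i
  · subst ha
    have hsum := sum_congr rfl fun b (_ : b ∈ univ) => moveOne_apply_add_ite hjj' hj hj' b
    simpa [sum_add_distrib, rowSum] using hsum
  · simp [rowSum, moveOne, ha]

lemma ferrers_moveOne (hjj' : j ≠ j') (hj : X i j = 0) (hj' : X i j' = 1) :
    Ferrers (moveOne X i j j') = Ferrers X := by
  funext a b
  simp only [Ferrers, rowSum_moveOne hjj' hj hj']

end Shift

section Deficit

variable {m n : ℕ} {F X : Fin m → Fin n → ℕ} {i : Fin m} {j j' : Fin n}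

lemma sub_le_sub_moveOne_add (hj : X i j = 0) (hj' : X i j' = 1) (a : Fin m) (b : Fin n) :
    F a b - X a b ≤ F a b - moveOne X i j j' a b + (if a = i ∧ b = j then 1 else 0) := by
  unfold moveOne
  split_ifs <;> subst_vars <;> omega

lemma sub_eq_sub_moveOne_add (hj : X i j = 0) (hj' : X i j' = 1) (hFj : F i j = 1)
    (hFj' : F i j' = 0) (a : Fin m) (b : Fin n) :
    F a b - X a b = F a b - moveOne X i j j' a b + (if a = i ∧ b = j then 1 else 0) := by
  unfold moveOne
  split_ifs <;> subst_vars <;> omega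

@[simp]
lemma deficit_self : deficit F F = 0 := by
  simp [deficit]

lemma deficit_le_of_isShift {Y : Fin m → Fin n → ℕ} (hs : IsShift X Y) :
    deficit F X ≤ deficit F Y + 1 := by
  obtain ⟨i, j, j', -, hj, hj', rfl⟩ := hs
  calc deficit F X
      ≤ ∑ b, ∑ a, (F a b - moveOne X i j j' a b + (if a = i ∧ b = j then 1 else 0)) :=
        sum_le_sum fun b _ => sum_le_sum fun a _ => sub_le_sub_moveOne_add hj hj' a b
    _ = deficit F (moveOne X i j j') + 1 := by
        simp [sum_add_distrib, ite_and, deficit]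

lemma deficit_moveOne_add_one (hj : X i j = 0) (hj' : X i j' = 1) (hFj : F i j = 1)
    (hFj' : F i j' = 0) : deficit F (moveOne X i j j') + 1 = deficit F X := by
  calc deficit F (moveOne X i j j') + 1
      = ∑ b, ∑ a, (F a b - moveOne X i j j' a b + (if a = i ∧ b = j then 1 else 0)) := by
        simp [sum_add_distrib, ite_and, deficit]
    _ = deficit F X :=
        sum_congr rfl fun b _ => sum_congr rfl fun a _ =>
          (sub_eq_sub_moveOne_add hj hj' hFj hFj' a b).symm

lemma deficit_le_of_shiftChain {k : ℕ} {Y : Fin m → Fin n → ℕ} (h : ShiftChain k X Y) :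
    deficit F X ≤ deficit F Y + k := by
  induction k generalizing X with
  | zero => cases h; simp
  | succ k ih =>
    obtain ⟨C, hXC, hCY⟩ := h
    have := deficit_le_of_isShift (F := F) hXC
    have := ih hCY
    omega

end Deficit

section Ferrers

variable {m n : ℕ} {X : Fin m → Fin n → ℕ}

lemma ZeroOne.rowSum_le (h01 : ZeroOne X) (i : Fin m) : rowSum X i ≤ n := by
  calc rowSum X i ≤ ∑ _j : Fin n, 1 := sum_le_sum fun j _ => by rcases h01 i j with h | h <;> omega
    _ = n := by simp

lemma ZeroOne.sum_ferrers (h01 : ZeroOne X) (i : Fin m) : ∑ j, Ferrers X i j = rowSum X i := by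
  simp [Ferrers, sum_boole, Fin.card_filter_val_lt, h01.rowSum_le i]

lemma ZeroOne.eq_ferrers_of_deficit_eq_zero (h01 : ZeroOne X) (h : deficit (Ferrers X) X = 0) :
    X = Ferrers X := by
  have hle : ∀ i j, Ferrers X i j ≤ X i j := fun i j => by
    have := (sum_eq_zero_iff.1 ((sum_eq_zero_iff.1 h) j (mem_univ j))) i (mem_univ i)
    omega
  funext i j
  exact ((sum_eq_sum_iff_of_le fun j _ => hle i j).1 (h01.sum_ferrers i) j (mem_univ j)).symm

lemma ZeroOne.exists_ferrers_lt (h01 : ZeroOne X) {i : Fin m} {j : Fin n}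
    (hj : X i j < Ferrers X i j) : ∃ j', Ferrers X i j' < X i j' := by
  by_contra! hge
  have := sum_lt_sum (fun j' _ => hge j') ⟨j, mem_univ j, hj⟩
  rw [h01.sum_ferrers] at this
  exact this.false

lemma ZeroOne.exists_misplaced_of_deficit_pos (h01 : ZeroOne X)
    (h : 0 < deficit (Ferrers X) X) :
    ∃ i j j', j < j' ∧ X i j = 0 ∧ X i j' = 1 ∧ Ferrers X i j = 1 ∧ Ferrers X i j' = 0 := by
  obtain ⟨j, -, hj⟩ := sum_pos_iff.1 h
  obtain ⟨i, -, hij⟩ := sum_pos_iff.1 hj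
  obtain ⟨j', hj'⟩ := h01.exists_ferrers_lt (i := i) (j := j) (by omega)
  have hj_lt : (j : ℕ) < rowSum X i := by
    by_contra hlt
    simp [Ferrers, hlt] at hij
  have hj'_ge : ¬ (j' : ℕ) < rowSum X i := by
    intro hlt
    simp only [Ferrers, hlt, if_true] at hj'
    rcases h01 i j' with h | h <;> omega
  refine ⟨i, j, j', by omega, ?_, ?_, if_pos hj_lt, if_neg hj'_ge⟩ <;>
    simp only [Ferrers, hj_lt, hj'_ge, if_true, if_false] at hij hj'
  · omega
  · rcases h01 i j' with h | h <;> omega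

end Ferrers

lemma shiftChain_deficit_ferrers {m n : ℕ} {X : Fin m → Fin n → ℕ} (h01 : ZeroOne X) :
    ShiftChain (deficit (Ferrers X) X) X (Ferrers X) := by
  induction hd : deficit (Ferrers X) X generalizing X with
  | zero => exact h01.eq_ferrers_of_deficit_eq_zero hd
  | succ d ih =>
    obtain ⟨i, j, j', hjj', hj, hj', hFj, hFj'⟩ :=
      h01.exists_misplaced_of_deficit_pos (hd ▸ d.succ_pos)
    have hF := ferrers_moveOne hjj'.ne hj hj'
    have hdY : deficit (Ferrers (moveOne X i j j')) (moveOne X i j j') = d := by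
      have := deficit_moveOne_add_one hj hj' hFj hFj'
      rw [hF]
      omega
    refine ⟨moveOne X i j j', isShift_moveOne hjj' hj hj', ?_⟩
    simpa [hF] using ih h01.moveOne hdY

theorem disc_eq_min_shifts_general {m n : ℕ} (A : Fin m → Fin n → ℕ)
    (h01 : ZeroOne A) :
    IsLeast {k : ℕ | ShiftChain k A (Ferrers A)} (disc A) :=
  ⟨shiftChain_deficit_ferrers h01, fun _ hk =>
    (deficit_le_of_shiftChain hk).trans_eq (by simp)⟩

/-- the minimum number of shifts to transform A into its Ferrers matrix is
Σ_j Σ_i (F_{i,j} − A_{i,j})^+, i.e. disc A. -/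
theorem disc_eq_min_shifts {m n : ℕ} (A : Fin m → Fin n → ℕ)
    (h01 : ZeroOne A) (hr : RowsMono A) (hc : ColsMono A) :
    IsLeast {k : ℕ | ShiftChain k A (Ferrers A)} (disc A) :=
  disc_eq_min_shifts_general A h01
end

section
/- disc(A) ≥ Σ_{j=1}^n (c'_j − c_j)^+, where c_j are the column sums of A and c'_j the column sums of its Ferrers matrix F. -/
open Finset

theorem Finset.sum_tsub_sum_le_sum_tsub {ι M : Type*} [AddCommMonoid M] [PartialOrder M]
    [IsOrderedAddMonoid M] [Sub M] [OrderedSub M] (s : Finset ι) (f g : ι → M) :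
    ∑ i ∈ s, f i - ∑ i ∈ s, g i ≤ ∑ i ∈ s, (f i - g i) := by
  rw [tsub_le_iff_right, ← sum_add_distrib]
  exact sum_le_sum fun i _ => le_tsub_add

theorem disc_ge_colSum_diff_general {m n : ℕ} (A : Fin m → Fin n → ℕ) :
    disc A ≥ ∑ j, (colSum (Ferrers A) j - colSum A j) :=
  sum_le_sum fun j _ => sum_tsub_sum_le_sum_tsub univ (fun i => Ferrers A i j) (A · j)

/-- disc(A) ≥ Σ_j (c'_j − c_j)^+. -/
theorem disc_ge_colSum_diff {m n : ℕ} (A : Fin m → Fin n → ℕ)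
    (h01 : ZeroOne A) (hr : RowsMono A) :
    disc A ≥ ∑ j, (colSum (Ferrers A) j - colSum A j) :=
  disc_ge_colSum_diff_general A
end

section
/- Id(A) equals the sum over the blocks i = 1,...,k of the minimum weights of perfect matchings in the bipartite graphs G_i, i.e. Id(A) = Σ_{i=1}^k w(M_i) where M_i is a minimum weighted perfect matching in G_i. -/
open Finset

/-! A column permutation of `A` preserving column sums permutes each block of equal column sum
independently, and the Ferrers matrix only depends on the row sums, which column permutations do
not change. Hence the discrepancy of `A^σ` is the sum over the blocks of the weights of the
matchings induced by `σ`, and minimising over `σ` splits into independent minimisations, one per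
block. -/

section FiberwiseAssignment

variable {ι β M : Type*} [Fintype ι] [DecidableEq β]

theorem Finset.sum_eq_sum_image_sum_fiber [AddCommMonoid M] (f : ι → β) (g : ι → M) :
    ∑ i, g i = ∑ b ∈ univ.image f, ∑ i : {i // f i = b}, g i := by
  rw [← sum_fiberwise_of_maps_to (fun i _ => mem_image_of_mem f (mem_univ i)) g]
  refine sum_congr rfl fun b _ => ?_
  exact sum_subtype _ (fun i => by simp) g

theorem sum_ofFiberEquiv_eq_sum_image [AddCommMonoid M] (f : ι → β)
    (e : ∀ b, Equiv.Perm {i // f i = b}) (w : ι → ι → M) :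
    ∑ i, w i (Equiv.ofFiberEquiv e i) = ∑ b ∈ univ.image f, ∑ i : {i // f i = b}, w i (e b i) := by
  rw [sum_eq_sum_image_sum_fiber f]
  refine sum_congr rfl fun b _ => sum_congr rfl fun i _ => ?_
  obtain ⟨i, rfl⟩ := i
  rfl

theorem iInf_fiberPreserving_sum_eq_sum_iInf [ConditionallyCompleteLinearOrder M]
    [AddCommMonoid M] [IsOrderedAddMonoid M] (f : ι → β) (w : ι → ι → M) :
    ⨅ σ : {σ : Equiv.Perm ι // ∀ i, f (σ i) = f i}, ∑ i, w i (σ.1 i) =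
      ∑ b ∈ univ.image f, ⨅ e : Equiv.Perm {i // f i = b}, ∑ i : {i // f i = b}, w i (e i) := by
  apply le_antisymm
  · choose e he using fun b => exists_eq_ciInf_of_finite
      (f := fun e : Equiv.Perm {i // f i = b} => ∑ i : {i // f i = b}, w i (e i))
    calc ⨅ σ : {σ : Equiv.Perm ι // ∀ i, f (σ i) = f i}, ∑ i, w i (σ.1 i)
        ≤ ∑ i, w i (Equiv.ofFiberEquiv e i) :=
          ciInf_le (Finite.bddBelow_range _)
            (⟨_, Equiv.ofFiberEquiv_map e⟩ : {σ : Equiv.Perm ι // ∀ i, f (σ i) = f i})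
      _ = _ := by rw [sum_ofFiberEquiv_eq_sum_image]; exact sum_congr rfl fun b _ => he b
  · have : Nonempty {σ : Equiv.Perm ι // ∀ i, f (σ i) = f i} := ⟨⟨1, fun _ => rfl⟩⟩
    obtain ⟨⟨σ, hσ⟩, hmin⟩ := exists_eq_ciInf_of_finite
      (f := fun σ : {σ : Equiv.Perm ι // ∀ i, f (σ i) = f i} => ∑ i, w i (σ.1 i))
    rw [← hmin, sum_eq_sum_image_sum_fiber f]
    exact sum_le_sum fun b _ =>
      ciInf_le (Finite.bddBelow_range _) (σ.subtypePerm fun i => by rw [hσ i])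

end FiberwiseAssignment

theorem rowSum_colApply {m n : ℕ} (A : Fin m → Fin n → ℕ) (σ : Equiv.Perm (Fin n)) :
    rowSum (colApply A σ) = rowSum A :=
  funext fun i => Equiv.sum_comp σ (A i)

theorem disc_colApply {m n : ℕ} (A : Fin m → Fin n → ℕ) (σ : Equiv.Perm (Fin n)) :
    disc (colApply A σ) = ∑ j, ∑ i, (Ferrers A i j - A i (σ j)) := by
  simp only [disc, Ferrers, rowSum_colApply, colApply]

theorem isoDisc_eq_iInf {m n : ℕ} (A : Fin m → Fin n → ℕ) :
    isoDisc A = ⨅ σ : {σ : Equiv.Perm (Fin n) // ∀ j, colSum A (σ j) = colSum A j},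
      ∑ j, ∑ i, (Ferrers A i j - A i (σ.1 j)) := by
  simp only [isoDisc, iInf, disc_colApply]
  congr 1
  ext d
  simp [ColPerm]

theorem isoDisc_eq_sum_matchings_general {m n : ℕ} (A : Fin m → Fin n → ℕ) :
    isoDisc A =
      ∑ x ∈ Finset.image (colSum A) Finset.univ,
        sInf {d | ∃ e : {j : Fin n // colSum A j = x} ≃ {j : Fin n // colSum A j = x},
          (∑ j : {j : Fin n // colSum A j = x},
            ∑ i, (Ferrers A i (j : Fin n) - A i ((e j : {j : Fin n // colSum A j = x}) : Fin n))) = d} := by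
  rw [isoDisc_eq_iInf]
  -- `⨅ e, c e` unfolds to `sInf {d | ∃ e, c e = d}`, the form of each block's minimum.
  exact iInf_fiberPreserving_sum_eq_sum_iInf (colSum A) fun j j' => ∑ i, (Ferrers A i j - A i j')

/-- Id(A) equals the sum over blocks of the minimum weights of perfect
matchings between the block's Ferrers columns and the block's A-columns. -/
theorem isoDisc_eq_sum_matchings {m n : ℕ} (A : Fin m → Fin n → ℕ)
    (h01 : ZeroOne A) (hr : RowsMono A) (hc : ColsMono A) :
    isoDisc A =
      ∑ x ∈ Finset.image (colSum A) Finset.univ,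
        sInf {d | ∃ e : {j : Fin n // colSum A j = x} ≃ {j : Fin n // colSum A j = x},
          (∑ j : {j : Fin n // colSum A j = x},
            ∑ i, (Ferrers A i (j : Fin n) - A i ((e j : {j : Fin n // colSum A j = x}) : Fin n))) = d} :=
  isoDisc_eq_sum_matchings_general A
end
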